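/- arXiv:2507.17581 — 5 statements merged into one kernel-verified Lean document; each statement's English description precedes it below -/
import Mathlib

section
/- Let n₁, n₂ be natural numbers and let M be a complex positive semidefinite matrix of size (n₁+n₂)×(n₁+n₂) written in block form M = fromBlocks M_a M_ab (M_abᴴ) M_b, where M_a is n₁×n₁, M_ab is n₁×n₂, and M_b is n₂×n₂. Suppose R_a is an n₁×n₁ complex matrix with M_a = R_aᴴ ⬝ R_a. Then there exist an n₁×n₂ complex matrix R_ab and an upper triangular n₂×n₂ complex matrix R_b such that, setting R = fromBlocks R_a R_ab 0 R_b, one has M = Rᴴ ⬝ R. (In words: any given Gram factorization of the top-left block of a positive semidefinite matrix can be completed to a block upper triangular Gram factorization of the whole matrix.) -/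
/-!
Write `M = fromBlocks A B Bᴴ D ≥ 0`. If `A x = 0` then `(x, 0)` is isotropic for `M`, hence lies in
its kernel, so `Bᴴ x = 0`; thus `ker A ⊆ ker Bᴴ` and `B = A Y` for some `Y`. Evaluating `M` on the
columns of `[-Y; 1]` shows that the generalized Schur complement `D - Yᴴ A Y` is positive
semidefinite. Given `A = Rᴴ R`, put `X = R Y`: then `B = Rᴴ X` and `D - Xᴴ X = D - Yᴴ A Y`, which
has an upper triangular factor by induction on its size (split off the first coordinate and apply
the same completion step to a `1 × 1` factor of it).
-/

open Matrix
open scoped ComplexOrder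

theorem LinearMap.exists_eq_comp_of_ker_le {K V W U : Type*} [DivisionRing K]
    [AddCommGroup V] [Module K V] [AddCommGroup W] [Module K W] [AddCommGroup U] [Module K U]
    {f : V →ₗ[K] W} {g : V →ₗ[K] U} (h : ker f ≤ ker g) : ∃ T : W →ₗ[K] U, g = T ∘ₗ f := by
  obtain ⟨L, hL⟩ := ((ker f).liftQ f le_rfl).exists_leftInverse_of_injective
    ((ker f).ker_liftQ_eq_bot f le_rfl le_rfl)
  refine ⟨(ker f).liftQ g h ∘ₗ L, ?_⟩
  calc g = (ker f).liftQ g h ∘ₗ (ker f).mkQ := ((ker f).liftQ_mkQ g h).symm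
    _ = (ker f).liftQ g h ∘ₗ (L ∘ₗ (ker f).liftQ f le_rfl) ∘ₗ (ker f).mkQ := by
      rw [hL, LinearMap.id_comp]
    _ = (ker f).liftQ g h ∘ₗ L ∘ₗ f := by
      rw [LinearMap.comp_assoc, (ker f).liftQ_mkQ]

namespace Matrix

variable {K 𝕜 : Type*} [Field K] [RCLike 𝕜] {k l m n : Type*}

theorem exists_eq_mul_of_forall_mulVec_eq_zero [Fintype m] [Fintype n]
    (A : Matrix n m K) (G : Matrix l m K) (h : ∀ x, A *ᵥ x = 0 → G *ᵥ x = 0) :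
    ∃ H : Matrix l n K, G = H * A := by
  classical
  obtain ⟨T, hT⟩ := LinearMap.exists_eq_comp_of_ker_le (f := toLin' A) (g := toLin' G) h
  exact ⟨LinearMap.toMatrix' T, by
    simpa only [LinearMap.toMatrix'_comp, LinearMap.toMatrix'_toLin'] using
      congrArg LinearMap.toMatrix' hT⟩

theorem IsHermitian.fromBlocks_toBlocks {α : Type*} [InvolutiveStar α]
    {M : Matrix (m ⊕ n) (m ⊕ n) α} (hM : M.IsHermitian) :
    Matrix.fromBlocks M.toBlocks₁₁ M.toBlocks₁₂ M.toBlocks₁₂ᴴ M.toBlocks₂₂ = M := by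
  rw [← Matrix.fromBlocks_toBlocks M] at hM
  rw [(isHermitian_fromBlocks_iff.mp hM).2.1, Matrix.fromBlocks_toBlocks]

section PosSemidef

variable [Fintype m] [Fintype n] {A : Matrix m m 𝕜} {B : Matrix m n 𝕜} {D : Matrix n n 𝕜}

theorem PosSemidef.exists_eq_conjTranspose_mul_self (hA : A.PosSemidef) :
    ∃ R : Matrix m m 𝕜, A = Rᴴ * R := by
  classical
  open scoped MatrixOrder in
  exact CStarAlgebra.nonneg_iff_eq_star_mul_self.mp hA.nonneg

theorem PosSemidef.conjTranspose_mulVec_eq_zero_of_fromBlocks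
    (hM : (fromBlocks A B Bᴴ D).PosSemidef) {x : m → 𝕜} (hx : A *ᵥ x = 0) : Bᴴ *ᵥ x = 0 := by
  have hMx : fromBlocks A B Bᴴ D *ᵥ Sum.elim x 0 = Sum.elim (A *ᵥ x) (Bᴴ *ᵥ x) := by
    simp [fromBlocks_mulVec]
  have hq : star (Sum.elim x 0) ⬝ᵥ fromBlocks A B Bᴴ D *ᵥ Sum.elim x 0 = 0 := by
    simp [hMx, hx, dotProduct, Fintype.sum_sum_type]
  rw [(hM.dotProduct_mulVec_zero_iff _).mp hq] at hMx
  exact funext fun i ↦ (congrFun hMx (Sum.inr i)).symm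

theorem PosSemidef.exists_eq_mul_of_fromBlocks (hM : (fromBlocks A B Bᴴ D).PosSemidef) :
    ∃ Y : Matrix m n 𝕜, B = A * Y := by
  obtain ⟨H, hH⟩ := exists_eq_mul_of_forall_mulVec_eq_zero A Bᴴ
    fun _ ↦ hM.conjTranspose_mulVec_eq_zero_of_fromBlocks
  refine ⟨Hᴴ, ?_⟩
  rw [← conjTranspose_conjTranspose B, hH, conjTranspose_mul,
    (isHermitian_fromBlocks_iff.mp hM.isHermitian).1.eq]

theorem PosSemidef.sub_conjTranspose_mul_mul_of_fromBlocks
    (hM : (fromBlocks A B Bᴴ D).PosSemidef) {Y : Matrix m n 𝕜} (hY : B = A * Y) :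
    (D - Yᴴ * A * Y).PosSemidef := by
  classical
  have hA : Aᴴ = A := (isHermitian_fromBlocks_iff.mp hM.isHermitian).1
  convert hM.conjTranspose_mul_mul_same (fromRows (-Y) 1) using 1
  rw [conjTranspose_fromRows_eq_fromCols_conjTranspose, fromCols_mul_fromBlocks,
    fromCols_mul_fromRows, hY, conjTranspose_mul, hA]
  simp only [conjTranspose_neg, conjTranspose_one, Matrix.one_mul, Matrix.mul_one,
    Matrix.neg_mul, Matrix.mul_neg, neg_add_cancel, Matrix.zero_mul, Matrix.mul_assoc]
  abel

theorem PosSemidef.exists_eq_conjTranspose_mul_and_posSemidef_sub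
    [Fintype k] (hM : (fromBlocks A B Bᴴ D).PosSemidef) {R : Matrix k m 𝕜} (hR : A = Rᴴ * R) :
    ∃ X : Matrix k n 𝕜, B = Rᴴ * X ∧ (D - Xᴴ * X).PosSemidef := by
  obtain ⟨Y, hY⟩ := hM.exists_eq_mul_of_fromBlocks
  refine ⟨R * Y, by rw [hY, hR, Matrix.mul_assoc], ?_⟩
  simpa only [conjTranspose_mul, hR, Matrix.mul_assoc] using
    hM.sub_conjTranspose_mul_mul_of_fromBlocks hY

end PosSemidef

theorem fromBlocks_eq_conjTranspose_mul_self [Fintype k] [Fintype l] [Fintype m] [Fintype n]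
    {A : Matrix m m 𝕜} {B : Matrix m n 𝕜} {D : Matrix n n 𝕜} {R : Matrix k m 𝕜}
    {X : Matrix k n 𝕜} {R' : Matrix l n 𝕜}
    (hR : A = Rᴴ * R) (hX : B = Rᴴ * X) (hR' : D - Xᴴ * X = R'ᴴ * R') :
    fromBlocks A B Bᴴ D = (fromBlocks R X 0 R')ᴴ * fromBlocks R X 0 R' := by
  rw [fromBlocks_conjTranspose, fromBlocks_multiply, ← hR, ← hX, ← hR', hX, conjTranspose_mul,
    conjTranspose_conjTranspose]
  simp only [conjTranspose_zero, Matrix.mul_zero, add_zero, Matrix.zero_mul, add_sub_cancel]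

theorem BlockTriangular.fromBlocks_zero₂₁ {R α : Type*} [Zero R] [Preorder α]
    {A : Matrix m m R} {B : Matrix m n R} {D : Matrix n n R} {b : m ⊕ n → α}
    (hA : A.BlockTriangular (b ∘ Sum.inl)) (hD : D.BlockTriangular (b ∘ Sum.inr))
    (hb : ∀ i j, b (Sum.inl i) ≤ b (Sum.inr j)) : (fromBlocks A B 0 D).BlockTriangular b := by
  rintro (i | i) (j | j) hij
  · exact hA hij
  · exact absurd hij (hb i j).not_gt
  · rfl
  · exact hD hij

theorem PosSemidef.exists_isUpperTriangular_eq_conjTranspose_mul_self {n : ℕ}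
    {S : Matrix (Fin n) (Fin n) 𝕜} (hS : S.PosSemidef) :
    ∃ R : Matrix (Fin n) (Fin n) 𝕜, R.IsUpperTriangular ∧ S = Rᴴ * R := by
  induction n with
  | zero => exact ⟨0, fun i ↦ i.elim0, Subsingleton.elim _ _⟩
  | succ n ih =>
    let e : Fin 1 ⊕ Fin n ≃ Fin (n + 1) := finSumFinEquiv.trans (finCongr (Nat.add_comm 1 n))
    have he_inl (i : Fin 1) : e (Sum.inl i) = 0 := by ext; simp [e, Subsingleton.elim i 0]
    have he_inr (j : Fin n) : e (Sum.inr j) = j.succ := by ext; simp [e]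
    set S' := S.submatrix e e
    have hS' : S'.PosSemidef := hS.submatrix e
    have hblocks := hS'.isHermitian.fromBlocks_toBlocks
    obtain ⟨R₁, hR₁⟩ : ∃ R₁, S'.toBlocks₁₁ = R₁ᴴ * R₁ :=
      (hS'.submatrix Sum.inl).exists_eq_conjTranspose_mul_self
    rw [← hblocks] at hS'
    obtain ⟨X, hX, hschur⟩ := hS'.exists_eq_conjTranspose_mul_and_posSemidef_sub hR₁
    obtain ⟨R', hR'_upper, hR'⟩ := ih hschur
    refine ⟨reindex e e (fromBlocks R₁ X 0 R'), ?_, ?_⟩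
    · refine blockTriangular_reindex_iff.mpr (BlockTriangular.fromBlocks_zero₂₁ ?_ ?_ ?_)
      · intro i j hij
        rw [Subsingleton.elim i j] at hij
        exact absurd hij (lt_irrefl _)
      · intro i j hij
        simp only [Function.comp_apply, id, he_inr, Fin.succ_lt_succ_iff] at hij
        exact hR'_upper hij
      · intro i j
        simp only [Function.comp_apply, id, he_inl, Fin.zero_le]
    · have hfac := fromBlocks_eq_conjTranspose_mul_self hR₁ hX hR'
      rw [hblocks] at hfac
      rw [reindex_apply, conjTranspose_submatrix, submatrix_mul_equiv _ _ _ e.symm, ← hfac]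
      simp [S']

end Matrix

/-- Any given Gram factorization of the top-left block of a positive semidefinite
matrix can be completed to a block upper triangular Gram factorization. -/
theorem cholesky_completion (n₁ n₂ : ℕ)
    (M_a : Matrix (Fin n₁) (Fin n₁) ℂ)
    (M_ab : Matrix (Fin n₁) (Fin n₂) ℂ)
    (M_b : Matrix (Fin n₂) (Fin n₂) ℂ)
    (hM : (Matrix.fromBlocks M_a M_ab M_abᴴ M_b).PosSemidef)
    (R_a : Matrix (Fin n₁) (Fin n₁) ℂ)
    (hRa : M_a = R_aᴴ * R_a) :
    ∃ (R_ab : Matrix (Fin n₁) (Fin n₂) ℂ) (R_b : Matrix (Fin n₂) (Fin n₂) ℂ),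
      (∀ i j : Fin n₂, j < i → R_b i j = 0) ∧
      Matrix.fromBlocks M_a M_ab M_abᴴ M_b =
        (Matrix.fromBlocks R_a R_ab 0 R_b)ᴴ * (Matrix.fromBlocks R_a R_ab 0 R_b) := by
  obtain ⟨R_ab, hR_ab, hschur⟩ := hM.exists_eq_conjTranspose_mul_and_posSemidef_sub hRa
  obtain ⟨R_b, hR_b_upper, hR_b⟩ := hschur.exists_isUpperTriangular_eq_conjTranspose_mul_self
  exact ⟨R_ab, R_b, fun _ _ hij ↦ hR_b_upper hij,
    fromBlocks_eq_conjTranspose_mul_self hRa hR_ab hR_b⟩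
end

section
/- Let A be a unital complex *-algebra and let a₀, a₁, b₀, b₁ ∈ A satisfy: aₓ³ = 1 and star aₓ = aₓ² for x ∈ {0,1}; b_y³ = 1 and star b_y = b_y² for y ∈ {0,1}; and aₓ * b_y = b_y * aₓ for all x, y ∈ {0,1}. Let ω = (−1 + i√3)/2 ∈ ℂ. Define the B₃ game polynomial P := a₀b₀ + a₀²b₀² + a₀b₁ + a₀²b₁² + a₁b₀ + a₁²b₀² + ω•(a₁b₁) + ω²•(a₁²b₁²). Define λ₁ = λ₂ = 5/1872, λ₃ = 5/4992, λ₄ = λ₆ = 1/11856, λ₅ = λ₇ = 259/1976, and S₁ := 12•a₀ + (1/4 − ω)•(b₁b₀) + (1/4 − ω²)•(b₀b₁) + (13ω/4 − 7)•b₀² + (13ω²/4 − 7)•b₁²; S₂ := 12ω²•a₁ + (1/4 − ω²)•(b₁b₀) + (1/4 − ω)•(b₀b₁) + (13ω/4 − 7ω²)•b₀² + (13ω²/4 − 7ω)•b₁²; S₃ := b₀² + ω•b₁² + ω²•(b₀b₁) + ω²•(b₁b₀); S₄ := 114•1 + (5ω² − 48)•(a₀b₀) + (5ω² − 23)•(a₀²b₀²)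 + (5ω − 48)•(a₀b₁) + (5ω − 23)•(a₀²b₁²); S₅ := a₀b₀ − a₀²b₁² + ((5ω − 3)/7)•(a₀²b₀² − a₀b₁); S₆ := 114•1 + (5ω − 48)•(a₁b₀) + (5ω − 23)•(a₁²b₀²) + (5ω² − 48)ω•(a₁b₁) + (5ω² − 23)ω²•(a₁²b₁²); S₇ := a₁b₀ − ω²•(a₁²b₁²) + ((5ω² − 3)/7)•(a₁²b₀² − ω•(a₁b₁)). Then 6•1 − P = ∑_{i=1}^{7} λᵢ • (star Sᵢ * Sᵢ). (This is a nice sum-of-squares certificate for the B₃ game: each Sᵢ involves the generators a₀ or a₁ of only one of Alice's questions.) -/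
lemma bthree_cube3 {A : Type*} [Monoid A] {g : A} (h : g ^ 3 = 1) (x : A) :
    g * (g * (g * x)) = x := by
  have hg : g * g * g = g ^ 3 := by rw [pow_succ, pow_succ, pow_one]
  rw [← mul_assoc, ← mul_assoc, hg, h, one_mul]

lemma bthree_cube1 {A : Type*} [Monoid A] {g : A} (h : g ^ 3 = 1) :
    g * (g * g) = 1 := by
  simpa using bthree_cube3 h 1

lemma bthree_swap {A : Type*} [Semigroup A] {a b : A} (h : a * b = b * a) (x : A) :
    b * (a * x) = a * (b * x) := by
  rw [← mul_assoc, ← h, mul_assoc]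

set_option maxHeartbeats 2000000 in
/-- A nice sum-of-squares certificate for the `𝓑₃` game: the game polynomial is
bounded by 6, certified by squares each involving only one of Alice's questions. -/
theorem bthree_nice_sos (A : Type*) [Ring A] [Algebra ℂ A] [StarRing A]
    [StarModule ℂ A]
    (a₀ a₁ b₀ b₁ : A)
    (ha₀ : a₀ ^ 3 = 1) (ha₀s : star a₀ = a₀ ^ 2)
    (ha₁ : a₁ ^ 3 = 1) (ha₁s : star a₁ = a₁ ^ 2)
    (hb₀ : b₀ ^ 3 = 1) (hb₀s : star b₀ = b₀ ^ 2)
    (hb₁ : b₁ ^ 3 = 1) (hb₁s : star b₁ = b₁ ^ 2)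
    (hc₀₀ : a₀ * b₀ = b₀ * a₀) (hc₀₁ : a₀ * b₁ = b₁ * a₀)
    (hc₁₀ : a₁ * b₀ = b₀ * a₁) (hc₁₁ : a₁ * b₁ = b₁ * a₁)
    (ω : ℂ) (hω : ω = (-1 + Complex.I * Real.sqrt 3) / 2)
    (P S₁ S₂ S₃ S₄ S₅ S₆ S₇ : A)
    (hP : P = a₀ * b₀ + a₀ ^ 2 * b₀ ^ 2 + a₀ * b₁ + a₀ ^ 2 * b₁ ^ 2
        + a₁ * b₀ + a₁ ^ 2 * b₀ ^ 2 + ω • (a₁ * b₁) + (ω ^ 2) • (a₁ ^ 2 * b₁ ^ 2))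
    (hS₁ : S₁ = (12 : ℂ) • a₀ + (1 / 4 - ω) • (b₁ * b₀) + (1 / 4 - ω ^ 2) • (b₀ * b₁)
        + (13 * ω / 4 - 7) • b₀ ^ 2 + (13 * ω ^ 2 / 4 - 7) • b₁ ^ 2)
    (hS₂ : S₂ = (12 * ω ^ 2) • a₁ + (1 / 4 - ω ^ 2) • (b₁ * b₀) + (1 / 4 - ω) • (b₀ * b₁)
        + (13 * ω / 4 - 7 * ω ^ 2) • b₀ ^ 2 + (13 * ω ^ 2 / 4 - 7 * ω) • b₁ ^ 2)
    (hS₃ : S₃ = b₀ ^ 2 + ω • b₁ ^ 2 + (ω ^ 2) • (b₀ * b₁) + (ω ^ 2) • (b₁ * b₀))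
    (hS₄ : S₄ = (114 : ℂ) • (1 : A) + (5 * ω ^ 2 - 48) • (a₀ * b₀)
        + (5 * ω ^ 2 - 23) • (a₀ ^ 2 * b₀ ^ 2) + (5 * ω - 48) • (a₀ * b₁)
        + (5 * ω - 23) • (a₀ ^ 2 * b₁ ^ 2))
    (hS₅ : S₅ = a₀ * b₀ - a₀ ^ 2 * b₁ ^ 2 + ((5 * ω - 3) / 7) • (a₀ ^ 2 * b₀ ^ 2 - a₀ * b₁))
    (hS₆ : S₆ = (114 : ℂ) • (1 : A) + (5 * ω - 48) • (a₁ * b₀)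
        + (5 * ω - 23) • (a₁ ^ 2 * b₀ ^ 2) + ((5 * ω ^ 2 - 48) * ω) • (a₁ * b₁)
        + ((5 * ω ^ 2 - 23) * ω ^ 2) • (a₁ ^ 2 * b₁ ^ 2))
    (hS₇ : S₇ = a₁ * b₀ - (ω ^ 2) • (a₁ ^ 2 * b₁ ^ 2)
        + ((5 * ω ^ 2 - 3) / 7) • (a₁ ^ 2 * b₀ ^ 2 - ω • (a₁ * b₁))) :
    (6 : ℂ) • (1 : A) - P =
      (5 / 1872 : ℂ) • (star S₁ * S₁) + (5 / 1872 : ℂ) • (star S₂ * S₂)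
      + (5 / 4992 : ℂ) • (star S₃ * S₃) + (1 / 11856 : ℂ) • (star S₄ * S₄)
      + (259 / 1976 : ℂ) • (star S₅ * S₅) + (1 / 11856 : ℂ) • (star S₆ * S₆)
      + (259 / 1976 : ℂ) • (star S₇ * S₇) := by
  have h3 : ((Real.sqrt 3 : ℝ) : ℂ) ^ 2 = 3 := by
    norm_cast
    rw [Real.sq_sqrt] <;> norm_num
  have hq : ω ^ 2 + ω + 1 = 0 := by
    rw [hω]
    linear_combination (Complex.I ^ 2 / 4) * h3 + (3 / 4 : ℂ) * Complex.I_sq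
  have hw2 : ω ^ 2 = -ω - 1 := by linear_combination hq
  have hw3 : ω ^ 3 = 1 := by linear_combination (ω - 1) * hq
  have hw4 : ω ^ 4 = ω := by linear_combination ω * hw3
  have hw5 : ω ^ 5 = -ω - 1 := by linear_combination (ω ^ 2) * hw3 + hw2
  have hw6 : ω ^ 6 = 1 := by linear_combination (ω ^ 3 + 1) * hw3
  have hw7 : ω ^ 7 = ω := by linear_combination (ω ^ 4 + ω) * hw3
  have hw8 : ω ^ 8 = -ω - 1 := by linear_combination (ω ^ 5 + ω ^ 2) * hw3 + hw2
  have hw9 : ω ^ 9 = 1 := by linear_combination (ω ^ 6 + ω ^ 3 + 1) * hw3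
  have hw10 : ω ^ 10 = ω := by linear_combination (ω ^ 7 + ω ^ 4 + ω) * hw3
  have hw11 : ω ^ 11 = -ω - 1 := by linear_combination (ω ^ 8 + ω ^ 5 + ω ^ 2) * hw3 + hw2
  have hw12 : ω ^ 12 = 1 := by linear_combination (ω ^ 9 + ω ^ 6 + ω ^ 3 + 1) * hw3
  have hconj : (starRingEnd ℂ) ω = ω ^ 2 := by
    rw [hω]
    simp only [map_div₀, map_add, map_mul, map_neg, map_one, Complex.conj_I,
      Complex.conj_ofReal, map_ofNat]
    linear_combination (-Complex.I ^ 2 / 4) * h3 + (-3 / 4 : ℂ) * Complex.I_sq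
  have ka₀ := bthree_cube3 ha₀
  have ka₁ := bthree_cube3 ha₁
  have kb₀ := bthree_cube3 hb₀
  have kb₁ := bthree_cube3 hb₁
  have ka₀' := bthree_cube1 ha₀
  have ka₁' := bthree_cube1 ha₁
  have kb₀' := bthree_cube1 hb₀
  have kb₁' := bthree_cube1 hb₁
  have s₀₀ := bthree_swap hc₀₀
  have s₀₁ := bthree_swap hc₀₁
  have s₁₀ := bthree_swap hc₁₀
  have s₁₁ := bthree_swap hc₁₁
  subst hP hS₁ hS₂ hS₃ hS₄ hS₅ hS₆ hS₇
  simp only [star_add, star_sub, star_smul, star_mul, star_one, star_pow,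
    ha₀s, ha₁s, hb₀s, hb₁s, Complex.star_def, map_div₀, map_add, map_sub,
    map_mul, map_neg, map_one, map_ofNat, map_pow, hconj]
  simp only [pow_succ, pow_zero, one_mul]
  simp only [mul_add, add_mul, sub_mul, mul_sub, smul_add, smul_sub,
    smul_mul_assoc, mul_smul_comm, smul_smul, mul_assoc, one_mul, mul_one,
    ka₀, ka₁, kb₀, kb₁, ka₀', ka₁', kb₀', kb₁',
    s₀₀, s₁₀, s₀₁, s₁₁, hc₀₀.symm, hc₀₁.symm, hc₁₀.symm, hc₁₁.symm]
  match_scalars <;>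
    (ring_nf; simp only [hw12, hw11, hw10, hw9, hw8, hw7, hw6, hw5, hw4, hw3, hw2]; try ring)
end

section
/- Let H be a complex Hilbert space and let A₀, A₁, B₀, B₁ be bounded linear operators on H satisfying: Aₓ³ = 1 and Aₓ* = Aₓ² for x ∈ {0,1}; B_y³ = 1 and B_y* = B_y² for y ∈ {0,1}; and Aₓ B_y = B_y Aₓ for all x, y ∈ {0,1}. Let ω = (−1 + i√3)/2 and P := A₀B₀ + A₀²B₀² + A₀B₁ + A₀²B₁² + A₁B₀ + A₁²B₀² + ω•(A₁B₁) + ω²•(A₁²B₁²). Then for every unit vector ψ ∈ H, the real part of ⟪ψ, P ψ⟫ is at most 6. (In words: the quantum value of the B₃ game, a 3-answer generalization of CHSH, is at most 6; this follows from its nice sum-of-squares decomposition.) -/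
open scoped InnerProductSpace

set_option maxHeartbeats 1000000 in
/-- The quantum value of the `𝓑₃` game (a 3-answer generalization of CHSH) is at
most 6. -/
theorem bthree_quantum_value (H : Type*) [NormedAddCommGroup H]
    [InnerProductSpace ℂ H] [CompleteSpace H]
    (A₀ A₁ B₀ B₁ : H →L[ℂ] H)
    (hA₀ : A₀ ^ 3 = 1) (hA₀s : ContinuousLinearMap.adjoint A₀ = A₀ ^ 2)
    (hA₁ : A₁ ^ 3 = 1) (hA₁s : ContinuousLinearMap.adjoint A₁ = A₁ ^ 2)
    (hB₀ : B₀ ^ 3 = 1) (hB₀s : ContinuousLinearMap.adjoint B₀ = B₀ ^ 2)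
    (hB₁ : B₁ ^ 3 = 1) (hB₁s : ContinuousLinearMap.adjoint B₁ = B₁ ^ 2)
    (hc₀₀ : A₀ * B₀ = B₀ * A₀) (hc₀₁ : A₀ * B₁ = B₁ * A₀)
    (hc₁₀ : A₁ * B₀ = B₀ * A₁) (hc₁₁ : A₁ * B₁ = B₁ * A₁)
    (ω : ℂ) (hω : ω = (-1 + Complex.I * Real.sqrt 3) / 2)
    (P : H →L[ℂ] H)
    (hP : P = A₀ * B₀ + A₀ ^ 2 * B₀ ^ 2 + A₀ * B₁ + A₀ ^ 2 * B₁ ^ 2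
        + A₁ * B₀ + A₁ ^ 2 * B₀ ^ 2 + ω • (A₁ * B₁) + (ω ^ 2) • (A₁ ^ 2 * B₁ ^ 2)) :
    ∀ ψ : H, ‖ψ‖ = 1 → (⟪ψ, P ψ⟫_ℂ).re ≤ 6 := by
  intro ψ hψ
  have h3 : (Real.sqrt 3 : ℂ) ^ 2 = 3 := by
    norm_cast
    rw [sq]
    exact_mod_cast Real.mul_self_sqrt (by norm_num)
  have hω2 : ω ^ 2 + ω + 1 = 0 := by
    rw [hω]
    linear_combination ((Real.sqrt 3 : ℂ) ^ 2 / 4) * Complex.I_sq - (1 / 4) * h3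
  have hωc : (starRingEnd ℂ) ω = -1 - ω := by
    rw [hω]
    simp only [map_div₀, map_add, map_mul, map_neg, map_one, Complex.conj_I,
      Complex.conj_ofReal, map_ofNat]
    ring
  have mvA0 : ∀ x y : H, ⟪A₀ x, y⟫_ℂ = ⟪x, A₀ (A₀ y)⟫_ℂ := by
    intro x y
    rw [← ContinuousLinearMap.adjoint_inner_right A₀ x y, hA₀s, sq,
      ContinuousLinearMap.mul_apply]
  have mvA1 : ∀ x y : H, ⟪A₁ x, y⟫_ℂ = ⟪x, A₁ (A₁ y)⟫_ℂ := by
    intro x y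
    rw [← ContinuousLinearMap.adjoint_inner_right A₁ x y, hA₁s, sq,
      ContinuousLinearMap.mul_apply]
  have mvB0 : ∀ x y : H, ⟪B₀ x, y⟫_ℂ = ⟪x, B₀ (B₀ y)⟫_ℂ := by
    intro x y
    rw [← ContinuousLinearMap.adjoint_inner_right B₀ x y, hB₀s, sq,
      ContinuousLinearMap.mul_apply]
  have mvB1 : ∀ x y : H, ⟪B₁ x, y⟫_ℂ = ⟪x, B₁ (B₁ y)⟫_ℂ := by
    intro x y
    rw [← ContinuousLinearMap.adjoint_inner_right B₁ x y, hB₁s, sq,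
      ContinuousLinearMap.mul_apply]
  have cm00 : ∀ w : H, B₀ (A₀ w) = A₀ (B₀ w) := by
    intro w
    rw [← ContinuousLinearMap.mul_apply, ← hc₀₀, ContinuousLinearMap.mul_apply]
  have cm01 : ∀ w : H, B₁ (A₀ w) = A₀ (B₁ w) := by
    intro w
    rw [← ContinuousLinearMap.mul_apply, ← hc₀₁, ContinuousLinearMap.mul_apply]
  have cm10 : ∀ w : H, B₀ (A₁ w) = A₁ (B₀ w) := by
    intro w
    rw [← ContinuousLinearMap.mul_apply, ← hc₁₀, ContinuousLinearMap.mul_apply]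
  have cm11 : ∀ w : H, B₁ (A₁ w) = A₁ (B₁ w) := by
    intro w
    rw [← ContinuousLinearMap.mul_apply, ← hc₁₁, ContinuousLinearMap.mul_apply]
  have cnA0 : ∀ w : H, A₀ (A₀ (A₀ w)) = w := by
    intro w
    rw [← ContinuousLinearMap.mul_apply, ← ContinuousLinearMap.mul_apply, ← pow_three',
      hA₀, ContinuousLinearMap.one_apply]
  have cnA1 : ∀ w : H, A₁ (A₁ (A₁ w)) = w := by
    intro w
    rw [← ContinuousLinearMap.mul_apply, ← ContinuousLinearMap.mul_apply, ← pow_three',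
      hA₁, ContinuousLinearMap.one_apply]
  have cnB0 : ∀ w : H, B₀ (B₀ (B₀ w)) = w := by
    intro w
    rw [← ContinuousLinearMap.mul_apply, ← ContinuousLinearMap.mul_apply, ← pow_three',
      hB₀, ContinuousLinearMap.one_apply]
  have cnB1 : ∀ w : H, B₁ (B₁ (B₁ w)) = w := by
    intro w
    rw [← ContinuousLinearMap.mul_apply, ← ContinuousLinearMap.mul_apply, ← pow_three',
      hB₁, ContinuousLinearMap.one_apply]
  have spA0 : ∀ w : H, (A₀ ^ 2) w = A₀ (A₀ w) := by
    intro w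
    rw [sq, ContinuousLinearMap.mul_apply]
  have spA1 : ∀ w : H, (A₁ ^ 2) w = A₁ (A₁ w) := by
    intro w
    rw [sq, ContinuousLinearMap.mul_apply]
  have spB0 : ∀ w : H, (B₀ ^ 2) w = B₀ (B₀ w) := by
    intro w
    rw [sq, ContinuousLinearMap.mul_apply]
  have spB1 : ∀ w : H, (B₁ ^ 2) w = B₁ (B₁ w) := by
    intro w
    rw [sq, ContinuousLinearMap.mul_apply]
  set t1 : H := ((-4566:ℂ) + (-66:ℂ) * ω) • (B₀ (B₀ (ψ))) + ((4566:ℂ) + (4500:ℂ) * ω) • (B₁ (B₁ (ψ))) + ((-584:ℂ) * ω) • (A₀ (ψ)) + ((1813:ℂ) + (42:ℂ) * ω) • (A₀ (A₀ (B₀ (ψ)))) + ((-1813:ℂ) + (-1771:ℂ) * ω) • (A₀ (A₀ (B₁ (ψ)))) + ((9520:ℂ)) • (A₁ (ψ)) + ((-2194:ℂ) + (1247:ℂ) * ω) • (A₁ (A₁ (B₀ (ψ)))) + ((1247:ℂ) + (-2194:ℂ) * ω) • (A₁ (A₁ (B₁ (ψ)))) with ht1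
  set t2 : H := ((-4421766:ℂ) + (-210222:ℂ) * ω) • (B₀ (B₀ (ψ))) + ((-810918:ℂ) + (-1080984:ℂ) * ω) • (B₁ (B₁ (ψ))) + ((-2980336:ℂ) + (1847176:ℂ) * ω) • (A₀ (ψ)) + ((5427139:ℂ)) • (A₀ (A₀ (B₀ (ψ)))) + ((2676595:ℂ) + (-1759469:ℂ) * ω) • (A₀ (A₀ (B₁ (ψ)))) + ((2568560:ℂ) + (375143:ℂ) * ω) • (A₁ (A₁ (B₀ (ψ)))) + ((-302327:ℂ) + (575728:ℂ) * ω) • (A₁ (A₁ (B₁ (ψ)))) with ht2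
  set t3 : H := ((1415980605:ℂ) + (687644915:ℂ) * ω) • (B₀ (B₀ (ψ))) + ((-757344236:ℂ) + (-9027786692:ℂ) * ω) • (B₁ (B₁ (ψ))) + ((-935857026:ℂ) + (2742694173:ℂ) * ω) • (A₀ (ψ)) + ((284636639:ℂ) + (2769339538:ℂ) * ω) • (A₀ (A₀ (B₁ (ψ)))) + ((-2990589235:ℂ) + (-1685785280:ℂ) * ω) • (A₁ (A₁ (B₀ (ψ)))) + ((5209002270:ℂ)) • (A₁ (A₁ (B₁ (ψ)))) with ht3
  set t4 : H := ((-231:ℂ) + (42:ℂ) * ω) • (A₀ (B₀ (ψ))) + ((-876:ℂ) + (1460:ℂ) * ω) • (A₀ (B₁ (ψ))) + ((69:ℂ) + (-213:ℂ) * ω) • (A₀ (A₀ (B₀ (B₀ (ψ))))) + ((2044:ℂ)) • (A₀ (A₀ (B₁ (B₁ (ψ))))) + ((42:ℂ) + (-1771:ℂ) * ω) • (A₁ (B₁ (ψ))) + ((-2054:ℂ) + (-807:ℂ) * ω) • (A₁ (A₁ (B₁ (B₁ (ψ))))) with ht4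
  set t5 : H := ((2042:ℂ) + (1313:ℂ) * ω) • (A₀ (B₀ (ψ))) + ((-1813:ℂ) + (-42:ℂ) * ω) • (A₀ (A₀ (B₀ (B₀ (ψ))))) + ((2044:ℂ)) • (A₁ (B₀ (ψ))) + ((-147:ℂ) + (147:ℂ) * ω) • (A₁ (B₁ (ψ))) + ((-2336:ℂ) + (-1460:ℂ) * ω) • (A₁ (A₁ (B₀ (B₀ (ψ))))) + ((273:ℂ) + (231:ℂ) * ω) • (A₁ (A₁ (B₁ (B₁ (ψ))))) with ht5
  set t6 : H := ((-169568216875:ℂ) + (-28561606745:ℂ) * ω) • (B₀ (B₀ (ψ))) + ((-38274363742:ℂ) + (-59920001384:ℂ) * ω) • (B₁ (B₁ (ψ))) + ((134302972518:ℂ) + (12988575171:ℂ) * ω) • (A₀ (ψ)) + ((-22489000677:ℂ) + (45533032266:ℂ) * ω) • (A₀ (A₀ (B₁ (ψ)))) + ((76891426905:ℂ)) • (A₁ (A₁ (B₀ (ψ)))) with ht6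
  set t7 : H := ((7:ℂ) + (7:ℂ) * ω) • (A₀ (B₀ (ψ))) + ((-8:ℂ) + (-3:ℂ) * ω) • (A₀ (A₀ (B₀ (B₀ (ψ))))) + ((7:ℂ)) • (A₁ (B₁ (ψ))) + ((-5:ℂ) + (-8:ℂ) * ω) • (A₁ (A₁ (B₁ (B₁ (ψ))))) with ht7
  set t8 : H := ((-5:ℂ) + (-10:ℂ) * ω) • (B₀ (B₀ (ψ))) + ((-2:ℂ) + (-10:ℂ) * ω) • (B₁ (B₁ (ψ))) + ((3:ℂ) + (15:ℂ) * ω) • (A₀ (ψ)) + ((3:ℂ)) • (A₀ (A₀ (B₁ (ψ)))) with ht8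
  have keyC : ⟪ψ, (A₀ * B₀ + A₀ ^ 2 * B₀ ^ 2 + A₀ * B₁ + A₀ ^ 2 * B₁ ^ 2 + A₁ * B₀ + A₁ ^ 2 * B₀ ^ 2 + ω • (A₁ * B₁) + ω ^ 2 • (A₁ ^ 2 * B₁ ^ 2)) ψ⟫_ℂ + (((1:ℂ)/123607680) * ⟪t1, t1⟫_ℂ + ((1:ℂ)/95833722975360) * ⟪t2, t2⟫_ℂ + ((1:ℂ)/107058411876483142110) * ⟪t3, t3⟫_ℂ + ((1:ℂ)/26539296) * ⟪t4, t4⟫_ℂ + ((1:ℂ)/26539296) * ⟪t5, t5⟫_ℂ + ((1:ℂ)/43337088190960216844670) * ⟪t6, t6⟫_ℂ + ((3063:ℂ)/4423216) * ⟪t7, t7⟫_ℂ + ((13744091647:ℂ)/41598261955605) * ⟪t8, t8⟫_ℂ) = 6 * ⟪ψ, ψ⟫_ℂ := by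
    rw [ht1]
    rw [ht2]
    rw [ht3]
    rw [ht4]
    rw [ht5]
    rw [ht6]
    rw [ht7]
    rw [ht8]
    simp only [ContinuousLinearMap.add_apply, ContinuousLinearMap.smul_apply,
      ContinuousLinearMap.mul_apply, spA0, spA1, spB0, spB1, inner_add_right,
      inner_smul_right, inner_add_left, inner_smul_left, map_add, map_sub, map_mul,
      map_neg, map_one, map_ofNat, hωc, mvA0, mvA1, mvB0, mvB1, cm00, cm01, cm10, cm11,
      cnA0, cnA1, cnB0, cnB1]
    linear_combination (((223100830016412873782819144834921:ℂ)/3632268692531623244739412783897440) * ⟪ψ, A₀ (B₀ (ψ))⟫_ℂ + ((223100830016412873782819144834921:ℂ)/3632268692531623244739412783897440) * ⟪ψ, A₀ (A₀ (B₀ (B₀ (ψ))))⟫_ℂ + ((10332203964794261218652228763313:ℂ)/16585701792381841300179967049760) * ⟪ψ, A₀ (B₁ (ψ))⟫_ℂ + ((10332203964794261218652228763313:ℂ)/16585701792381841300179967049760) * ⟪ψ, A₀ (A₀ (B₁ (B₁ (ψ))))⟫_ℂ + ((35866054601852084285:ℂ)/2911988803040341465392) * ⟪ψ, A₁ (B₀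 (ψ))⟫_ℂ + ((35866054601852084285:ℂ)/2911988803040341465392) * ⟪ψ, A₁ (A₁ (B₀ (B₀ (ψ))))⟫_ℂ + ((468648001363:ℂ)/15003380036890) * ⟪ψ, A₁ (B₁ (ψ))⟫_ℂ + ((15472028038253:ℂ)/15003380036890) * ⟪ψ, A₁ (A₁ (B₁ (B₁ (ψ))))⟫_ℂ + ((-13170635460238290035643712091801483:ℂ)/6538083646556921840530943011015392) * ⟪ψ, ψ⟫_ℂ + ((-57738877555245686460715140679:ℂ)/31986710599593551078918507881680) * ⟪ψ, B₀ (B₁ (B₁ (ψ)))⟫_ℂ + ((1055862539292270698092041475:ℂ)/55183481009773224288953679648) * ⟪ψ, A₀ (A₀ (B₀ (B₁ (ψ))))⟫_ℂ + ((457192629163:ℂ)/55903005068960) * ⟪ψ, A₁ (A₁ (B₀ (B₁ (ψ))))⟫_ℂ + ((-57738877555245686460715140679:ℂ)/31986710599593551078918507881680) * ⟪ψ, B₁ (B₀ (B₀ (ψ)))⟫_ℂ + ((-225:ℂ)/147152) * ⟪ψ, A₀ (A₀ (B₁ (B₀ (ψ))))⟫_ℂ + ((-5338296634505496786731:ℂ)/29119888030403414653920)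 * ⟪ψ, A₁ (A₁ (B₁ (B₀ (ψ))))⟫_ℂ + ((1265:ℂ)/12984) * ⟪ψ, A₀ (A₀ (A₁ (ψ)))⟫_ℂ + ((92277799981701424661:ℂ)/808885778622317073720) * ⟪ψ, A₀ (A₀ (A₁ (A₁ (B₀ (ψ)))))⟫_ℂ + ((32049791407:ℂ)/1397575126724) * ⟪ψ, A₀ (A₀ (A₁ (A₁ (B₁ (ψ)))))⟫_ℂ + ((-225:ℂ)/147152) * ⟪ψ, A₀ (B₀ (B₀ (B₁ (B₁ (ψ)))))⟫_ℂ + ((1015836294131:ℂ)/55903005068960) * ⟪ψ, B₀ (B₀ (B₁ (ψ)))⟫_ℂ + ((-565391181791:ℂ)/23958430743840) * ⟪ψ, A₀ (A₁ (A₁ (ψ)))⟫_ℂ + ((1097:ℂ)/1471520) * ⟪ψ, A₀ (A₁ (A₁ (B₀ (B₀ (B₁ (ψ))))))⟫_ℂ + ((1055862539292270698092041475:ℂ)/55183481009773224288953679648) * ⟪ψ, A₀ (B₁ (B₁ (B₀ (B₀ (ψ)))))⟫_ℂ + ((1015836294131:ℂ)/55903005068960) * ⟪ψ, B₁ (B₁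 (B₀ (ψ)))⟫_ℂ + ((284381188744525518001:ℂ)/4159984004343344950560) * ⟪ψ, A₀ (A₁ (A₁ (B₁ (B₁ (B₀ (ψ))))))⟫_ℂ + ((1265:ℂ)/12984) * ⟪ψ, A₁ (A₁ (A₀ (ψ)))⟫_ℂ + ((-5338296634505496786731:ℂ)/29119888030403414653920) * ⟪ψ, A₁ (B₀ (B₀ (B₁ (B₁ (ψ)))))⟫_ℂ + ((92277799981701424661:ℂ)/808885778622317073720) * ⟪ψ, A₁ (A₀ (B₀ (B₀ (ψ))))⟫_ℂ + ((-565391181791:ℂ)/23958430743840) * ⟪ψ, A₁ (A₀ (A₀ (ψ)))⟫_ℂ + ((284381188744525518001:ℂ)/4159984004343344950560) * ⟪ψ, A₁ (A₀ (A₀ (B₀ (B₀ (B₁ (ψ))))))⟫_ℂ + ((457192629163:ℂ)/55903005068960) * ⟪ψ, A₁ (B₁ (B₁ (B₀ (B₀ (ψ)))))⟫_ℂ + ((32049791407:ℂ)/1397575126724) * ⟪ψ, A₁ (A₀ (B₁ (B₁ (ψ))))⟫_ℂ + ((1097:ℂ)/1471520) * ⟪ψ, A₁ (A₀ (A₀ (B₁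 (B₁ (B₀ (ψ))))))⟫_ℂ + ((-5649:ℂ)/1263776) * ⟪ψ, A₀ (A₀ (A₁ (B₀ (B₀ (B₁ (ψ))))))⟫_ℂ + ((36179:ℂ)/1263776) * ⟪ψ, A₀ (A₀ (A₁ (A₁ (B₀ (B₀ (B₁ (B₁ (ψ))))))))⟫_ℂ + ((-17669:ℂ)/1263776) * ⟪ψ, A₀ (A₁ (B₀ (B₁ (ψ))))⟫_ℂ + ((-201087:ℂ)/8846432) * ⟪ψ, A₀ (A₁ (A₁ (B₀ (B₁ (B₁ (ψ))))))⟫_ℂ + ((-5649:ℂ)/1263776) * ⟪ψ, A₁ (A₁ (A₀ (B₁ (B₁ (B₀ (ψ))))))⟫_ℂ + ((-17669:ℂ)/1263776) * ⟪ψ, A₁ (A₁ (A₀ (A₀ (B₁ (B₁ (B₀ (B₀ (ψ))))))))⟫_ℂ + ((36179:ℂ)/1263776) * ⟪ψ, A₁ (A₀ (B₁ (B₀ (ψ))))⟫_ℂ + ((-201087:ℂ)/8846432) * ⟪ψ, A₁ (A₀ (A₀ (B₁ (B₀ (B₀ (ψ))))))⟫_ℂ) * hω2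
  have hpsi1 : ⟪ψ, ψ⟫_ℂ = 1 := by
    rw [inner_self_eq_norm_sq_to_K, hψ]
    norm_num
  have hts1 : ⟪t1, t1⟫_ℂ = ((‖t1‖ ^ 2 : ℝ) : ℂ) := by
    rw [inner_self_eq_norm_sq_to_K]
    norm_cast
  have hts2 : ⟪t2, t2⟫_ℂ = ((‖t2‖ ^ 2 : ℝ) : ℂ) := by
    rw [inner_self_eq_norm_sq_to_K]
    norm_cast
  have hts3 : ⟪t3, t3⟫_ℂ = ((‖t3‖ ^ 2 : ℝ) : ℂ) := by
    rw [inner_self_eq_norm_sq_to_K]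
    norm_cast
  have hts4 : ⟪t4, t4⟫_ℂ = ((‖t4‖ ^ 2 : ℝ) : ℂ) := by
    rw [inner_self_eq_norm_sq_to_K]
    norm_cast
  have hts5 : ⟪t5, t5⟫_ℂ = ((‖t5‖ ^ 2 : ℝ) : ℂ) := by
    rw [inner_self_eq_norm_sq_to_K]
    norm_cast
  have hts6 : ⟪t6, t6⟫_ℂ = ((‖t6‖ ^ 2 : ℝ) : ℂ) := by
    rw [inner_self_eq_norm_sq_to_K]
    norm_cast
  have hts7 : ⟪t7, t7⟫_ℂ = ((‖t7‖ ^ 2 : ℝ) : ℂ) := by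
    rw [inner_self_eq_norm_sq_to_K]
    norm_cast
  have hts8 : ⟪t8, t8⟫_ℂ = ((‖t8‖ ^ 2 : ℝ) : ℂ) := by
    rw [inner_self_eq_norm_sq_to_K]
    norm_cast
  rw [hpsi1, hts1, hts2, hts3, hts4, hts5, hts6, hts7, hts8] at keyC
  have h6 : ⟪ψ, (A₀ * B₀ + A₀ ^ 2 * B₀ ^ 2 + A₀ * B₁ + A₀ ^ 2 * B₁ ^ 2 + A₁ * B₀ + A₁ ^ 2 * B₀ ^ 2 + ω • (A₁ * B₁) + ω ^ 2 • (A₁ ^ 2 * B₁ ^ 2)) ψ⟫_ℂ = ((6 - (((1:ℝ)/123607680) * ‖t1‖ ^ 2 + ((1:ℝ)/95833722975360) * ‖t2‖ ^ 2 + ((1:ℝ)/107058411876483142110) * ‖t3‖ ^ 2 + ((1:ℝ)/26539296) * ‖t4‖ ^ 2 + ((1:ℝ)/26539296) * ‖t5‖ ^ 2 + ((1:ℝ)/43337088190960216844670) * ‖t6‖ ^ 2 + ((3063:ℝ)/4423216) * ‖t7‖ ^ 2 + ((13744091647:ℝ)/41598261955605) * ‖t8‖ ^ 2) : ℝ) :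 ℂ) := by
    push_cast at keyC ⊢
    linear_combination keyC
  rw [hP, h6, Complex.ofReal_re]
  have hnn : (0:ℝ) ≤ ((1:ℝ)/123607680) * ‖t1‖ ^ 2 + ((1:ℝ)/95833722975360) * ‖t2‖ ^ 2 + ((1:ℝ)/107058411876483142110) * ‖t3‖ ^ 2 + ((1:ℝ)/26539296) * ‖t4‖ ^ 2 + ((1:ℝ)/26539296) * ‖t5‖ ^ 2 + ((1:ℝ)/43337088190960216844670) * ‖t6‖ ^ 2 + ((3063:ℝ)/4423216) * ‖t7‖ ^ 2 + ((13744091647:ℝ)/41598261955605) * ‖t8‖ ^ 2 := by positivity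
  linarith
end

section
/- Let A be a unital *-algebra over ℝ (or ℂ) in which 2 is invertible, and let a₁, a₂, a₃, b₁, b₂, b₃ ∈ A satisfy: star aᵢ = aᵢ and aᵢ² = 1 for i = 1,2,3; star bⱼ = bⱼ and bⱼ² = 1 for j = 1,2,3; and aᵢ bⱼ = bⱼ aᵢ for all i, j. Define the bipartite matching game polynomial P := a₁(b₁ − b₂ − b₃) + a₂(b₂ − b₁ − b₃) + a₃(b₃ − b₁ − b₂), and set T₁ := a₁ − (b₁ − b₂ − b₃)/2, T₂ := a₂ − (b₂ − b₁ − b₃)/2, T₃ := a₃ − (b₃ − b₁ − b₂)/2, T₄ := (b₁ + b₂ + b₃)/2. Then 6•1 − P = T₁*T₁ + T₂*T₂ + T₃*T₃ + T₄*T₄ (where Tᵢ* denotes star Tᵢ). (This is a degree-1 nice sum-of-squares certificate for the bipartite matching game: each Tᵢ contains at most one of Alice's operators.) -/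
/-- A degree-1 nice sum-of-squares certificate for the bipartite matching game. -/
theorem matching_game_nice_sos (A : Type*) [Ring A] [Algebra ℝ A] [StarRing A]
    (a₁ a₂ a₃ b₁ b₂ b₃ : A)
    (ha₁s : star a₁ = a₁) (ha₁ : a₁ ^ 2 = 1)
    (ha₂s : star a₂ = a₂) (ha₂ : a₂ ^ 2 = 1)
    (ha₃s : star a₃ = a₃) (ha₃ : a₃ ^ 2 = 1)
    (hb₁s : star b₁ = b₁) (hb₁ : b₁ ^ 2 = 1)
    (hb₂s : star b₂ = b₂) (hb₂ : b₂ ^ 2 = 1)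
    (hb₃s : star b₃ = b₃) (hb₃ : b₃ ^ 2 = 1)
    (hc : ∀ x ∈ [a₁, a₂, a₃], ∀ y ∈ [b₁, b₂, b₃], x * y = y * x)
    (P T₁ T₂ T₃ T₄ : A)
    (hP : P = a₁ * (b₁ - b₂ - b₃) + a₂ * (b₂ - b₁ - b₃) + a₃ * (b₃ - b₁ - b₂))
    (hT₁ : T₁ = a₁ - (1 / 2 : ℝ) • (b₁ - b₂ - b₃))
    (hT₂ : T₂ = a₂ - (1 / 2 : ℝ) • (b₂ - b₁ - b₃))
    (hT₃ : T₃ = a₃ - (1 / 2 : ℝ) • (b₃ - b₁ - b₂))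
    (hT₄ : T₄ = (1 / 2 : ℝ) • (b₁ + b₂ + b₃)) :
    (6 : ℝ) • (1 : A) - P =
      star T₁ * T₁ + star T₂ * T₂ + star T₃ * T₃ + star T₄ * T₄ := by
  have he : star ((1/2:ℝ) • (1:A)) = (1/2:ℝ) • (1:A) := by
    have h2 : ((1/2:ℝ) • (1:A)) + ((1/2:ℝ) • (1:A)) = 1 := by
      rw [← add_smul]; norm_num
    have h3 : star ((1/2:ℝ) • (1:A)) + star ((1/2:ℝ) • (1:A)) = 1 := by
      rw [← star_add, h2, star_one]
    calc star ((1/2:ℝ) • (1:A))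
        = (1/2:ℝ) • (star ((1/2:ℝ) • (1:A)) + star ((1/2:ℝ) • (1:A))) := by
          rw [← two_smul ℝ, smul_smul]; norm_num
      _ = (1/2:ℝ) • (1:A) := by rw [h3]
  have hs : ∀ x : A, star ((1/2:ℝ) • x) = (1/2:ℝ) • (star x) := by
    intro x
    have h1 : ((1/2:ℝ) • x) = ((1/2:ℝ) • (1:A)) * x := by
      rw [smul_mul_assoc, one_mul]
    rw [h1, star_mul, he, mul_smul_comm, mul_one]
  have c11 := hc a₁ (by simp) b₁ (by simp)
  have c12 := hc a₁ (by simp) b₂ (by simp)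
  have c13 := hc a₁ (by simp) b₃ (by simp)
  have c21 := hc a₂ (by simp) b₁ (by simp)
  have c22 := hc a₂ (by simp) b₂ (by simp)
  have c23 := hc a₂ (by simp) b₃ (by simp)
  have c31 := hc a₃ (by simp) b₁ (by simp)
  have c32 := hc a₃ (by simp) b₂ (by simp)
  have c33 := hc a₃ (by simp) b₃ (by simp)
  have ha₁' : a₁ * a₁ = 1 := by rw [← sq]; exact ha₁
  have ha₂' : a₂ * a₂ = 1 := by rw [← sq]; exact ha₂
  have ha₃' : a₃ * a₃ = 1 := by rw [← sq]; exact ha₃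
  have hb₁' : b₁ * b₁ = 1 := by rw [← sq]; exact hb₁
  have hb₂' : b₂ * b₂ = 1 := by rw [← sq]; exact hb₂
  have hb₃' : b₃ * b₃ = 1 := by rw [← sq]; exact hb₃
  subst hP hT₁ hT₂ hT₃ hT₄
  simp only [star_sub, star_add, hs, ha₁s, ha₂s, ha₃s, hb₁s, hb₂s, hb₃s,
    mul_sub, sub_mul, mul_add, add_mul, smul_sub, smul_add,
    smul_mul_assoc, mul_smul_comm, smul_smul,
    ha₁', ha₂', ha₃', hb₁', hb₂', hb₃', c11, c12, c13, c21, c22, c23, c31, c32, c33]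
  module
end

section
/- Let H be a complex Hilbert space and let A₁, A₂, A₃, B₁, B₂, B₃ be bounded linear operators on H satisfying Aᵢ* = Aᵢ, Aᵢ² = 1, Bⱼ* = Bⱼ, Bⱼ² = 1, and Aᵢ Bⱼ = Bⱼ Aᵢ for all i, j ∈ {1,2,3}. Let P := A₁(B₁ − B₂ − B₃) + A₂(B₂ − B₁ − B₃) + A₃(B₃ − B₁ − B₂). Then for every unit vector ψ ∈ H, the real part of ⟪ψ, P ψ⟫ is at most 6. (In words: the quantum value of the bipartite matching game is at most 6.) -/
open scoped InnerProductSpace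

/-- The quantum value of the bipartite matching game is at most 6. -/
theorem matching_game_quantum_value (H : Type*) [NormedAddCommGroup H]
    [InnerProductSpace ℂ H] [CompleteSpace H]
    (A₁ A₂ A₃ B₁ B₂ B₃ : H →L[ℂ] H)
    (hA₁s : ContinuousLinearMap.adjoint A₁ = A₁) (hA₁ : A₁ ^ 2 = 1)
    (hA₂s : ContinuousLinearMap.adjoint A₂ = A₂) (hA₂ : A₂ ^ 2 = 1)
    (hA₃s : ContinuousLinearMap.adjoint A₃ = A₃) (hA₃ : A₃ ^ 2 = 1)
    (hB₁s : ContinuousLinearMap.adjoint B₁ = B₁) (hB₁ : B₁ ^ 2 = 1)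
    (hB₂s : ContinuousLinearMap.adjoint B₂ = B₂) (hB₂ : B₂ ^ 2 = 1)
    (hB₃s : ContinuousLinearMap.adjoint B₃ = B₃) (hB₃ : B₃ ^ 2 = 1)
    (hc : ∀ X ∈ [A₁, A₂, A₃], ∀ Y ∈ [B₁, B₂, B₃], X * Y = Y * X)
    (P : H →L[ℂ] H)
    (hP : P = A₁ * (B₁ - B₂ - B₃) + A₂ * (B₂ - B₁ - B₃) + A₃ * (B₃ - B₁ - B₂)) :
    ∀ ψ : H, ‖ψ‖ = 1 → (⟪ψ, P ψ⟫_ℂ).re ≤ 6 := by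
  intro ψ hψ
  have hadj : ∀ (A : H →L[ℂ] H), ContinuousLinearMap.adjoint A = A →
      ∀ v : H, ⟪ψ, A v⟫_ℂ = ⟪A ψ, v⟫_ℂ := by
    intro A hs v
    rw [← ContinuousLinearMap.adjoint_inner_left, hs]
  have hinv : ∀ (A : H →L[ℂ] H), A ^ 2 = 1 → ∀ v : H, A (A v) = v := by
    intro A h2 v
    have := congrArg (fun T : H →L[ℂ] H => T v) h2
    simpa [pow_two] using this
  have hnorm : ∀ (A : H →L[ℂ] H), ContinuousLinearMap.adjoint A = A → A ^ 2 = 1 →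
      ‖A ψ‖ = 1 := by
    intro A hs h2
    have h1 : ⟪A ψ, A ψ⟫_ℂ = ⟪ψ, ψ⟫_ℂ := by
      rw [← hadj A hs (A ψ), hinv A h2 ψ]
    have h2' : ‖A ψ‖ ^ 2 = ‖ψ‖ ^ 2 := by
      have := congrArg Complex.re h1
      simp only [← RCLike.re_to_complex] at this
      rwa [inner_self_eq_norm_sq, inner_self_eq_norm_sq] at this
    rw [← Real.sqrt_sq (norm_nonneg (A ψ)), h2', hψ, one_pow, Real.sqrt_one]
  set X₁ : H →L[ℂ] H := B₁ - B₂ - B₃ with hX₁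
  set X₂ : H →L[ℂ] H := B₂ - B₁ - B₃ with hX₂
  set X₃ : H →L[ℂ] H := B₃ - B₁ - B₂ with hX₃
  set S : H →L[ℂ] H := B₁ + B₂ + B₃ with hS
  -- step 1 : bound by sum of norms
  have step1 : (⟪ψ, P ψ⟫_ℂ).re ≤ ‖X₁ ψ‖ + ‖X₂ ψ‖ + ‖X₃ ψ‖ := by
    have hPψ : P ψ = A₁ (X₁ ψ) + A₂ (X₂ ψ) + A₃ (X₃ ψ) := by
      simp [hP, ContinuousLinearMap.add_apply, ContinuousLinearMap.mul_apply]
    rw [hPψ, inner_add_right, inner_add_right,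
        hadj A₁ hA₁s, hadj A₂ hA₂s, hadj A₃ hA₃s]
    simp only [Complex.add_re]
    have b1 := re_inner_le_norm (𝕜 := ℂ) (A₁ ψ) (X₁ ψ)
    have b2 := re_inner_le_norm (𝕜 := ℂ) (A₂ ψ) (X₂ ψ)
    have b3 := re_inner_le_norm (𝕜 := ℂ) (A₃ ψ) (X₃ ψ)
    rw [hnorm A₁ hA₁s hA₁, one_mul] at b1
    rw [hnorm A₂ hA₂s hA₂, one_mul] at b2
    rw [hnorm A₃ hA₃s hA₃, one_mul] at b3
    simp only [RCLike.re_to_complex] at b1 b2 b3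
    exact add_le_add (add_le_add b1 b2) b3
  -- squared norms as inner products
  have hnsq : ∀ (X : H →L[ℂ] H), ContinuousLinearMap.adjoint X = X →
      ‖X ψ‖ ^ 2 = (⟪ψ, X (X ψ)⟫_ℂ).re := by
    intro X hs
    rw [hadj X hs]
    simpa using (inner_self_eq_norm_sq (𝕜 := ℂ) (X ψ)).symm
  have hX₁s : ContinuousLinearMap.adjoint X₁ = X₁ := by
    simp [hX₁, map_sub, hB₁s, hB₂s, hB₃s]
  have hX₂s : ContinuousLinearMap.adjoint X₂ = X₂ := by
    simp [hX₂, map_sub, hB₁s, hB₂s, hB₃s]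
  have hX₃s : ContinuousLinearMap.adjoint X₃ = X₃ := by
    simp [hX₃, map_sub, hB₁s, hB₂s, hB₃s]
  have hSs : ContinuousLinearMap.adjoint S = S := by
    simp [hS, map_add, hB₁s, hB₂s, hB₃s]
  -- the key vector identity
  have hvec : X₁ (X₁ ψ) + X₂ (X₂ ψ) + X₃ (X₃ ψ) + S (S ψ) = (12 : ℂ) • ψ := by
    simp only [hX₁, hX₂, hX₃, hS, ContinuousLinearMap.sub_apply,
      ContinuousLinearMap.add_apply, map_sub, map_add]
    rw [hinv B₁ hB₁ ψ, hinv B₂ hB₂ ψ, hinv B₃ hB₃ ψ]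
    module
  have step2 : ‖X₁ ψ‖ ^ 2 + ‖X₂ ψ‖ ^ 2 + ‖X₃ ψ‖ ^ 2 + ‖S ψ‖ ^ 2 = 12 := by
    rw [hnsq X₁ hX₁s, hnsq X₂ hX₂s, hnsq X₃ hX₃s, hnsq S hSs,
        ← Complex.add_re, ← Complex.add_re, ← Complex.add_re,
        ← inner_add_right, ← inner_add_right, ← inner_add_right, hvec,
        inner_smul_right]
    have hψψ : ⟪ψ, ψ⟫_ℂ = 1 := by
      rw [inner_self_eq_norm_sq_to_K, hψ]
      norm_num
    rw [hψψ]
    norm_num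
  have h1 := norm_nonneg (X₁ ψ)
  have h2 := norm_nonneg (X₂ ψ)
  have h3 := norm_nonneg (X₃ ψ)
  have h4 := sq_nonneg (‖S ψ‖)
  nlinarith [sq_nonneg (‖X₁ ψ‖ - ‖X₂ ψ‖), sq_nonneg (‖X₁ ψ‖ - ‖X₃ ψ‖),
    sq_nonneg (‖X₂ ψ‖ - ‖X₃ ψ‖), step1, step2]
end
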